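/- Let α, ε, δ be reals with 0 < ε < α and 0 < δ < 1, let γ > 1, set c = 2γ/ε², let M̲ be any integer with M̲ ≥ 1 + (γ/(δ(γ−1)))^{1/(γ−1)}, and let W : ℕ → ℕ assign to each M ≥ 1 an integer window size with W(M) ≥ c · max{log M̲, log M} (natural logarithm). Then the probability that the stopping criterion of DiscoverMass triggers while insufficient mass has been discovered is small: P( there exists an integer M ≥ 1 with R_{M,W(M)} < α − ε and π(U_M) > α ) ≤ δ. Equivalently, with probability at least 1 − δ, at every M for which the stopping criterion R_{M,W(M)} < α − ε holds, the discovered mass satisfies π(O_M) ≥ 1 − α. -/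

import Mathlib

/-!
Fix `M` and condition on the first `M` draws. The observed set is then fixed, and the
`W` fresh draws are independent of it, so the discovery rate is an empirical frequency of
the unobserved set `U_M`. If `π(U_M) > α`, a rate below `α - ε` is a downward deviation
of at least `ε`, which by Hoeffding has probability at most `exp (-2 W ε²)`. The choice
`W(M) ≥ (2γ/ε²) log (max M̲ M)` makes this at most `(max M̲ M) ^ (-γ)`, and a union bound
over `M` together with the integral comparison `∑_{M > M̲} M ^ (-γ) ≤ M̲ ^ (1 - γ) / (γ - 1)`
gives the total `M̲ ^ (1 - γ) γ / (γ - 1) ≤ δ`.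
-/

open MeasureTheory ProbabilityTheory Real

lemma sum_range_rpow_neg_le_rpow_one_sub_div {γ x : ℝ} (hγ : 1 < γ) (hx : 0 < x) (n : ℕ) :
    ∑ i ∈ Finset.range n, (x + ↑(i + 1)) ^ (-γ) ≤ x ^ (1 - γ) / (γ - 1) := by
  have hanti : AntitoneOn (fun y : ℝ => y ^ (-γ)) (Set.Icc x (x + n)) := fun a ha b _ hab =>
    rpow_le_rpow_of_nonpos (hx.trans_le ha.1) hab (by linarith)
  have hint : ∫ y in x..x + n, y ^ (-γ) = ((x + n) ^ (1 - γ) - x ^ (1 - γ)) / (1 - γ) := by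
    rw [integral_rpow (Or.inr ⟨by linarith, ?_⟩)]
    · ring_nf
    · rw [Set.uIcc_of_le (by linarith)]
      exact fun h => absurd h.1 (not_le.mpr hx)
  have hpos : 0 ≤ (x + n) ^ (1 - γ) := rpow_nonneg (by positivity) _
  calc ∑ i ∈ Finset.range n, (x + ↑(i + 1)) ^ (-γ) ≤ ∫ y in x..x + n, y ^ (-γ) :=
        hanti.sum_le_integral
    _ = (x ^ (1 - γ) - (x + n) ^ (1 - γ)) / (γ - 1) := by
      rw [hint, ← neg_div_neg_eq]; ring_nf
    _ ≤ x ^ (1 - γ) / (γ - 1) := by gcongr; linarith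

lemma tsum_ofReal_max_rpow_neg_le {γ : ℝ} (hγ : 1 < γ) {L : ℕ} (hL : 0 < L) :
    ∑' n : ℕ, ENNReal.ofReal (((max L (n + 1) : ℕ) : ℝ) ^ (-γ))
      ≤ ENNReal.ofReal ((L : ℝ) ^ (1 - γ) * γ / (γ - 1)) := by
  have hL' : (0 : ℝ) < L := by exact_mod_cast hL
  rw [← ENNReal.summable.sum_add_tsum_nat_add' (k := L)]
  have hhead : ∑ n ∈ Finset.range L, ENNReal.ofReal (((max L (n + 1) : ℕ) : ℝ) ^ (-γ))
      = ENNReal.ofReal ((L : ℝ) ^ (1 - γ)) := by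
    rw [Finset.sum_congr rfl fun n hn => by
      rw [max_eq_left (Finset.mem_range.mp hn : n < L)]]
    rw [Finset.sum_const, Finset.card_range, nsmul_eq_mul, ← ENNReal.ofReal_natCast,
      ← ENNReal.ofReal_mul hL'.le, sub_eq_neg_add, rpow_add_one hL'.ne', mul_comm]
  have htail : ∑' i, ENNReal.ofReal (((max L (i + L + 1) : ℕ) : ℝ) ^ (-γ))
      ≤ ENNReal.ofReal ((L : ℝ) ^ (1 - γ) / (γ - 1)) := by
    refine ENNReal.tsum_le_of_sum_range_le fun n => ?_
    rw [← ENNReal.ofReal_sum_of_nonneg fun i _ => by positivity]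
    refine ENNReal.ofReal_le_ofReal (le_of_eq_of_le (Finset.sum_congr rfl fun i _ => ?_)
      (sum_range_rpow_neg_le_rpow_one_sub_div hγ hL' n))
    rw [max_eq_right (by omega)]
    push_cast; ring_nf
  have hsplit : (L : ℝ) ^ (1 - γ) * γ / (γ - 1)
      = (L : ℝ) ^ (1 - γ) + (L : ℝ) ^ (1 - γ) / (γ - 1) := by
    field_simp [(by linarith : γ - 1 ≠ 0)]; ring
  rw [hhead, hsplit, ENNReal.ofReal_add (by positivity) (by have := hγ; positivity)]
  gcongr

lemma rpow_one_sub_mul_div_le {γ δ L : ℝ} (hγ : 1 < γ) (hδ : 0 < δ)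
    (hL : (γ / (δ * (γ - 1))) ^ (1 / (γ - 1)) ≤ L) : L ^ (1 - γ) * γ / (γ - 1) ≤ δ := by
  have hγ1 : 0 < γ - 1 := by linarith
  set a := γ / (δ * (γ - 1))
  have ha : 0 < a := by positivity
  have hK : 0 < a ^ (1 / (γ - 1)) := rpow_pos_of_pos ha _
  have haL : a ≤ L ^ (γ - 1) := by
    calc a = (a ^ (1 / (γ - 1))) ^ (γ - 1) := by
          rw [← rpow_mul ha.le, one_div_mul_cancel hγ1.ne', rpow_one]
      _ ≤ L ^ (γ - 1) := by gcongr
  have hLinv : L ^ (1 - γ) ≤ a⁻¹ := by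
    rw [show 1 - γ = -(γ - 1) by ring, rpow_neg (hK.le.trans hL)]
    exact inv_anti₀ ha haL
  calc L ^ (1 - γ) * γ / (γ - 1) ≤ a⁻¹ * γ / (γ - 1) := by gcongr
    _ = δ := by simp only [a]; field_simp

lemma exp_neg_two_mul_sq_le_rpow_neg {γ ε c w L : ℝ} (hγ : 0 < γ) (hε : 0 < ε)
    (hc : c = 2 * γ / ε ^ 2) (hL : 1 ≤ L) (hw : c * log L ≤ w) :
    exp (-2 * w * ε ^ 2) ≤ L ^ (-γ) := by
  have hlog : 0 ≤ log L := log_nonneg hL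
  have hcw : 2 * γ * log L ≤ w * ε ^ 2 := by
    have := mul_le_mul_of_nonneg_right hw (sq_nonneg ε)
    rwa [hc, div_mul_eq_mul_div, div_mul_eq_mul_div, mul_div_cancel_right₀ _ (by positivity)]
      at this
  rw [rpow_def_of_pos (by linarith), exp_le_exp]
  nlinarith [mul_nonneg hγ.le hlog, sq_nonneg ε]

def unobserved {Ω B : Type*} (ω : ℕ → Ω → B) (M : ℕ) (x : Ω) : Set B :=
  {b | ∀ i ∈ Finset.Icc 1 M, ω i x ≠ b}

noncomputable def discoveryRate {Ω B : Type*} [DecidableEq B] (ω : ℕ → Ω → B) (M W : ℕ) (x : Ω) :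
    ℝ :=
  (1 / (W : ℝ)) * ∑ i ∈ Finset.Icc 1 W,
    if ∀ j ∈ Finset.Icc (1 : ℕ) M, ω j x ≠ ω (M + i) x then (1 : ℝ) else 0

lemma unobserved_eq_compl_range {Ω B : Type*} (ω : ℕ → Ω → B) (M : ℕ) (x : Ω) :
    unobserved ω M x = (Set.range fun j : Finset.Icc 1 M => ω j x)ᶜ := by
  ext b; simp [unobserved]

section Probability

variable {Ω B : Type*} [MeasurableSpace Ω] {P : Measure Ω} [IsProbabilityMeasure P]
  [MeasurableSpace B] {μ : Measure B}

lemma measureReal_sum_indicator_le_le {ι : Type*} {ω : ι → Ω → B} (hmeas : ∀ i, Measurable (ω i))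
    (hindep : iIndepFun ω P) (hdist : ∀ i, P.map (ω i) = μ) {S : Set B} (hS : MeasurableSet S)
    (s : Finset ι) {t : ℝ} (ht : 0 ≤ t) :
    P.real {x | ∑ i ∈ s, S.indicator 1 (ω i x) ≤ s.card * (μ.real S - t)}
      ≤ exp (-2 * s.card * t ^ 2) := by
  set X : ι → Ω → ℝ := fun i x => S.indicator 1 (ω i x)
  have hXmeas : ∀ i, Measurable (X i) := fun i => (measurable_one.indicator hS).comp (hmeas i)
  have hmean : ∀ i, P[X i] = μ.real S := fun i => by
    rw [← integral_indicator_one hS, ← hdist i,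
      integral_map (hmeas i).aemeasurable (by fun_prop)]
  have hsubG : ∀ i ∈ s, HasSubgaussianMGF (fun x => μ.real S - X i x) (1 / 4) P := by
    intro i _
    have h := hasSubgaussianMGF_of_mem_Icc (μ := P) (a := 0) (b := 1) (hXmeas i).aemeasurable
      (ae_of_all _ fun x => by by_cases hx : ω i x ∈ S <;> simp [X, hx])
    convert h.neg using 1
    · ext x; simp [hmean i]
    · norm_num
  have hindepX : iIndepFun (fun i x => μ.real S - X i x) P :=
    hindep.comp (fun _ b => μ.real S - S.indicator 1 b) fun _ => by fun_prop
  have h := HasSubgaussianMGF.measure_sum_ge_le_of_iIndepFun hindepX hsubG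
    (ε := s.card * t) (by positivity)
  rcases s.eq_empty_or_nonempty with rfl | hs
  · simp
  refine le_trans (measureReal_mono fun x hx => ?_) (h.trans_eq ?_)
  · simp only [Set.mem_ofPred_eq, Finset.sum_sub_distrib, Finset.sum_const, nsmul_eq_mul]
      at hx ⊢
    linarith
  · have : (0 : ℝ) < s.card := by exact_mod_cast hs.card_pos
    rw [Finset.sum_const, nsmul_eq_mul]
    push_cast
    field_simp
    ring_nf

lemma measure_setOf_mem_le_of_indepFun {α β : Type*} [Fintype α] [MeasurableSpace α]
    [MeasurableSingletonClass α] [MeasurableSpace β] {X : Ω → α} {Y : Ω → β}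
    (hX : Measurable X) (hXY : IndepFun X Y P) {D : α → Set β} (hD : ∀ a, MeasurableSet (D a))
    {b : ENNReal} (hb : ∀ a, P (Y ⁻¹' D a) ≤ b) :
    P {x | Y x ∈ D (X x)} ≤ b := by
  have hunion : {x | Y x ∈ D (X x)} = ⋃ a, X ⁻¹' {a} ∩ Y ⁻¹' D a := by
    ext x; simp
  calc P {x | Y x ∈ D (X x)} ≤ ∑ a, P (X ⁻¹' {a} ∩ Y ⁻¹' D a) := by
        rw [hunion]; exact measure_iUnion_fintype_le _ _
    _ = ∑ a, P (X ⁻¹' {a}) * P (Y ⁻¹' D a) := by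
        simp_rw [hXY.measure_inter_preimage_eq_mul _ _ (measurableSet_singleton _) (hD _)]
    _ ≤ ∑ a, P (X ⁻¹' {a}) * b := by gcongr with a; exact hb a
    _ = b := by
        rw [← Finset.sum_mul,
          sum_measure_preimage_singleton _ fun a _ => hX (measurableSet_singleton a)]
        simp

variable [Fintype B] [MeasurableSingletonClass B] {ω : ℕ → Ω → B}

lemma measure_sum_indicator_unobserved_le_le (hmeas : ∀ i, Measurable (ω i))
    (hindep : iIndepFun ω P) (hdist : ∀ i, P.map (ω i) = μ) (M W : ℕ) {ε : ℝ} (hε : 0 ≤ ε) :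
    P {x | ∑ i ∈ Finset.Icc 1 W, (unobserved ω M x).indicator 1 (ω (M + i) x)
        ≤ W * (μ.real (unobserved ω M x) - ε)} ≤ ENNReal.ofReal (exp (-2 * W * ε ^ 2)) := by
  -- The past block `a` fixes the unobserved set `(range a)ᶜ`, and the future block `s₂` is
  -- independent of it, so Hoeffding can be applied to each `D a` separately.
  set s₂ := (Finset.Icc 1 W).map (addLeftEmbedding M)
  have hdisj : Disjoint (Finset.Icc 1 M) s₂ := by
    simp only [s₂, Finset.disjoint_left, Finset.mem_Icc, Finset.mem_map,
      addLeftEmbedding_apply]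
    omega
  have hcard : s₂.card = W := by simp [s₂]
  let D : (Finset.Icc 1 M → B) → Set (s₂ → B) := fun a =>
    {v | ∑ j, (Set.range a)ᶜ.indicator 1 (v j) ≤ W * (μ.real (Set.range a)ᶜ - ε)}
  have hsum : ∀ x (S : Set B), ∑ j : s₂, S.indicator (1 : B → ℝ) (ω j x)
      = ∑ i ∈ Finset.Icc 1 W, S.indicator 1 (ω (M + i) x) := fun x S => by
    rw [Finset.sum_coe_sort s₂ (fun j => S.indicator 1 (ω j x)), Finset.sum_map]; rfl
  have hevent : {x | ∑ i ∈ Finset.Icc 1 W, (unobserved ω M x).indicator 1 (ω (M + i) x)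
        ≤ W * (μ.real (unobserved ω M x) - ε)}
      = {x | (fun j : s₂ => ω j x) ∈ D (fun j : Finset.Icc 1 M => ω j x)} := by
    ext x
    simp only [D, Set.mem_ofPred_eq, unobserved_eq_compl_range, hsum]
  rw [hevent]
  refine measure_setOf_mem_le_of_indepFun (X := fun x (j : Finset.Icc 1 M) => ω j x)
    (measurable_pi_lambda _ fun j => hmeas j) (hindep.indepFun_finset _ s₂ hdisj hmeas)
    (fun _ => (Set.toFinite _).measurableSet) fun a => ?_
  have h := measureReal_sum_indicator_le_le hmeas hindep hdist
    (Set.toFinite (Set.range a)ᶜ).measurableSet s₂ hε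
  rw [hcard] at h
  have hpre : (fun x (j : s₂) => ω j x) ⁻¹' D a = {x | ∑ i ∈ s₂, (Set.range a)ᶜ.indicator 1 (ω i x)
      ≤ W * (μ.real (Set.range a)ᶜ - ε)} := by
    ext x
    simp only [D, Set.mem_preimage, Set.mem_ofPred_eq,
      Finset.sum_coe_sort s₂ fun j => (Set.range a)ᶜ.indicator (1 : B → ℝ) (ω j x)]
  rw [hpre, ← ofReal_measureReal]
  exact ENNReal.ofReal_le_ofReal h

lemma measure_discoveryRate_lt_le [DecidableEq B] (hmeas : ∀ i, Measurable (ω i))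
    (hindep : iIndepFun ω P) (hdist : ∀ i, P.map (ω i) = μ) (M : ℕ) {W : ℕ} (hW : 0 < W)
    {α ε : ℝ} (hε : 0 ≤ ε) :
    P {x | discoveryRate ω M W x < α - ε ∧ α < μ.real (unobserved ω M x)}
      ≤ ENNReal.ofReal (exp (-2 * W * ε ^ 2)) := by
  refine le_trans (measure_mono fun x ⟨hrate, hmass⟩ => ?_)
    (measure_sum_indicator_unobserved_le_le hmeas hindep hdist M W hε)
  have hW' : (0 : ℝ) < W := by exact_mod_cast hW
  have hind : ∀ i, (unobserved ω M x).indicator (1 : B → ℝ) (ω (M + i) x)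
      = if ∀ j ∈ Finset.Icc (1 : ℕ) M, ω j x ≠ ω (M + i) x then 1 else 0 := fun i => by
    simp [Set.indicator_apply, unobserved]
  rw [discoveryRate, one_div, inv_mul_lt_iff₀ hW'] at hrate
  simp only [Set.mem_ofPred_eq, hind]
  linarith [mul_lt_mul_of_pos_left hmass hW']

lemma measure_discoveryRate_lt_le_rpow_neg [DecidableEq B] (hmeas : ∀ i, Measurable (ω i))
    (hindep : iIndepFun ω P) (hdist : ∀ i, P.map (ω i) = μ) {α ε γ c : ℝ} (hε : 0 < ε)
    (hγ : 0 < γ) (hc : c = 2 * γ / ε ^ 2) {Mlow M W : ℕ} (hMlow : 1 < Mlow) (hM : 1 ≤ M)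
    (hW : c * max (log Mlow) (log M) ≤ W) :
    P {x | discoveryRate ω M W x < α - ε ∧ α < μ.real (unobserved ω M x)}
      ≤ ENNReal.ofReal (((max Mlow M : ℕ) : ℝ) ^ (-γ)) := by
  have hc0 : 0 < c := by rw [hc]; positivity
  have hL : (1 : ℝ) ≤ (max Mlow M : ℕ) := by exact_mod_cast hM.trans (le_max_right _ _)
  have hlog : log ((max Mlow M : ℕ) : ℝ) ≤ max (log Mlow) (log M) := by
    rcases max_choice Mlow M with h | h <;> rw [h]
    exacts [le_max_left _ _, le_max_right _ _]
  have hW0 : (0 : ℝ) < W := (mul_pos hc0 (log_pos (by exact_mod_cast hMlow))).trans_le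
    ((mul_le_mul_of_nonneg_left (le_max_left _ _) hc0.le).trans hW)
  refine (measure_discoveryRate_lt_le hmeas hindep hdist M (by exact_mod_cast hW0) hε.le).trans
    (ENNReal.ofReal_le_ofReal (exp_neg_two_mul_sq_le_rpow_neg hγ hε hc hL ?_))
  exact (mul_le_mul_of_nonneg_left hlog hc0.le).trans hW

end Probability

theorem discoverMass_stopping_criterion_general
    {Ω : Type*} [MeasurableSpace Ω] (P : Measure Ω) [IsProbabilityMeasure P]
    {B : Type*} [Fintype B] [DecidableEq B]
    [MeasurableSpace B] [MeasurableSingletonClass B]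
    (μ : Measure B)
    (ω : ℕ → Ω → B)
    (hmeas : ∀ i, Measurable (ω i))
    (hindep : iIndepFun ω P)
    (hdist : ∀ i, Measure.map (ω i) P = μ)
    (α ε δ γ c : ℝ) (hε : 0 < ε) (hδ0 : 0 < δ)
    (hγ : 1 < γ) (hc : c = 2 * γ / ε ^ 2)
    (Mlow : ℕ) (hMlow : 1 + (γ / (δ * (γ - 1))) ^ (1 / (γ - 1)) ≤ (Mlow : ℝ))
    (W : ℕ → ℕ)
    (hW : ∀ M : ℕ, 1 ≤ M → c * max (Real.log Mlow) (Real.log M) ≤ (W M : ℝ)) :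
    P {x | ∃ M : ℕ, 1 ≤ M ∧
          (1 / (W M : ℝ)) * ∑ i ∈ Finset.Icc 1 (W M),
              (if ∀ j ∈ Finset.Icc (1 : ℕ) M, ω j x ≠ ω (M + i) x then (1 : ℝ) else 0)
            < α - ε
          ∧ (μ {b | ∀ i ∈ Finset.Icc 1 M, ω i x ≠ b}).toReal > α}
      ≤ ENNReal.ofReal δ := by
  have hMlow1 : 1 < Mlow := by
    have : 0 < (γ / (δ * (γ - 1))) ^ (1 / (γ - 1)) :=
      rpow_pos_of_pos (div_pos (by linarith) (mul_pos hδ0 (by linarith))) _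
    exact_mod_cast (by linarith : (1 : ℝ) < Mlow)
  calc _ ≤ P (⋃ n : ℕ, {x | discoveryRate ω (n + 1) (W (n + 1)) x < α - ε
          ∧ α < μ.real (unobserved ω (n + 1) x)}) :=
        measure_mono fun x hx => by
          obtain ⟨M, hM, hx⟩ := hx
          exact Set.mem_iUnion.2 ⟨M - 1, by rw [Nat.sub_add_cancel hM]; exact hx⟩
    _ ≤ ∑' n : ℕ, ENNReal.ofReal (((max Mlow (n + 1) : ℕ) : ℝ) ^ (-γ)) :=
        (measure_iUnion_le _).trans (ENNReal.tsum_le_tsum fun n =>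
          measure_discoveryRate_lt_le_rpow_neg hmeas hindep hdist hε (by linarith) hc hMlow1
            n.succ_pos (hW _ n.succ_pos))
    _ ≤ ENNReal.ofReal ((Mlow : ℝ) ^ (1 - γ) * γ / (γ - 1)) :=
        tsum_ofReal_max_rpow_neg_le hγ (by omega)
    _ ≤ ENNReal.ofReal δ :=
        ENNReal.ofReal_le_ofReal (rpow_one_sub_mul_div_le hγ hδ0 (by linarith))

/-- Correctness of the stopping criterion of `DiscoverMass`: with
`c = 2γ/ε²`, `M̲ ≥ 1 + (γ/(δ(γ-1)))^(1/(γ-1))` and windows `W M ≥ c max (log M̲) (log M)`,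
the probability that there exists `M ≥ 1` with `R_{M,W M} < α - ε` while `π(U_M) > α`
is at most `δ`. -/
theorem discoverMass_stopping_criterion
    {Ω : Type*} [MeasurableSpace Ω] (P : Measure Ω) [IsProbabilityMeasure P]
    {B : Type*} [Fintype B] [Nonempty B] [DecidableEq B]
    [MeasurableSpace B] [MeasurableSingletonClass B]
    (μ : Measure B) [IsProbabilityMeasure μ]
    (ω : ℕ → Ω → B)
    (hmeas : ∀ i, Measurable (ω i))
    (hindep : iIndepFun ω P)
    (hdist : ∀ i, Measure.map (ω i) P = μ)
    (α ε δ γ c : ℝ) (hε : 0 < ε) (hεα : ε < α) (hδ0 : 0 < δ) (hδ1 : δ < 1)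
    (hγ : 1 < γ) (hc : c = 2 * γ / ε ^ 2)
    (Mlow : ℕ) (hMlow : 1 + (γ / (δ * (γ - 1))) ^ (1 / (γ - 1)) ≤ (Mlow : ℝ))
    (W : ℕ → ℕ)
    (hW : ∀ M : ℕ, 1 ≤ M → c * max (Real.log Mlow) (Real.log M) ≤ (W M : ℝ)) :
    P {x | ∃ M : ℕ, 1 ≤ M ∧
          (1 / (W M : ℝ)) * ∑ i ∈ Finset.Icc 1 (W M),
              (if ∀ j ∈ Finset.Icc (1 : ℕ) M, ω j x ≠ ω (M + i) x then (1 : ℝ) else 0)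
            < α - ε
          ∧ (μ {b | ∀ i ∈ Finset.Icc 1 M, ω i x ≠ b}).toReal > α}
      ≤ ENNReal.ofReal δ :=
  discoverMass_stopping_criterion_general P μ ω hmeas hindep hdist α ε δ γ c hε hδ0 hγ hc Mlow hMlow
    W hW
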